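/- arXiv:0906.4308 — 3 statements merged into one kernel-verified Lean document; each statement's English description precedes it below -/
import Mathlib

section
/- Let d ≥ 1, let U ⊆ ℝ^d be an open set that is star-shaped with center u ∈ U, and let ω : ℝ^d → (ℝ^d →L[ℝ] ℝ) be continuously differentiable on U. Define g : ℝ^d → ℝ by g(x) = ∫_0^1 ω(u + t·(x−u))(x−u) dt. Then for every x ∈ U, g is differentiable at x and its derivative is the continuous linear map v ↦ ω(x)(v) − ∫_0^1 t·[ (Dω(u + t·(x−u))(x−u))(v) − (Dω(u + t·(x−u))(v))(x−u) ] dt, where Dω(y) denotes the Fréchet derivative of ω at y. (This is the contracting-homotopy identity d∘h_0 + h_1∘d = id of the paper's Lemma 3.6 in degree 1.) -/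
open Set Filter Topology MeasureTheory
open scoped Interval

/-! With `γ t = u + t • (x - u)`, differentiating under the integral sign gives
`Dg(x) v = ∫₀¹ ω(γ t) v + t • Dω(γ t) v (x - u) dt`; this is legitimate because the derivative of
the integrand is jointly continuous on `U × [0, 1]`, hence bounded near `{x} × [0, 1]` by
compactness of `[0, 1]`. Since `ω(γ t) v + t • Dω(γ t) (x - u) v` is the `t`-derivative of
`t • ω(γ t) v`, its integral is `ω x v`, and the difference of the two integrands is the
antisymmetrised term. -/

theorem IsCompact.exists_eventually_forall_norm_le_of_continuousOn_prod
    {X Y G : Type*} [TopologicalSpace X] [TopologicalSpace Y] [NormedAddCommGroup G]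
    {U : Set X} {K : Set Y} {x : X} {f : X → Y → G} (hK : IsCompact K) (hU : IsOpen U) (hx : x ∈ U)
    (hf : ContinuousOn (fun p : X × Y => f p.1 p.2) (U ×ˢ K)) :
    ∃ C, ∀ᶠ y in 𝓝 x, y ∈ U ∧ ∀ t ∈ K, ‖f y t‖ ≤ C := by
  obtain ⟨C, hC⟩ := hK.exists_bound_of_continuousOn
    (hf.comp (Continuous.prodMk_right x).continuousOn fun t ht => ⟨hx, ht⟩)
  have hnear : ∀ᶠ y in 𝓝 x, ∀ t ∈ K, (y, t) ∈ U ×ˢ K → ‖f y t‖ < C + 1 :=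
    hK.eventually_forall_of_forall_eventually fun t ht => eventually_nhdsWithin_iff.1 <|
      (hf (x, t) ⟨hx, ht⟩).norm.eventually (gt_mem_nhds ((hC t ht).trans_lt (lt_add_one C)))
  exact ⟨C + 1, (hU.eventually_mem hx).and hnear |>.mono fun y hy =>
    ⟨hy.1, fun t ht => (hy.2 t ht ⟨hy.1, ht⟩).le⟩⟩

theorem hasFDerivAt_intervalIntegral_of_continuousOn_prod
    {E G : Type*} [NormedAddCommGroup E] [NormedSpace ℝ E] [NormedAddCommGroup G]
    [NormedSpace ℝ G] {f : E → ℝ → G} {f' : E → ℝ → E →L[ℝ] G} {U : Set E} {a b : ℝ} {x : E}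
    (hU : IsOpen U) (hx : x ∈ U) (hf : ∀ y ∈ U, ContinuousOn (f y) [[a, b]])
    (hf' : ContinuousOn (fun p : E × ℝ => f' p.1 p.2) (U ×ˢ [[a, b]]))
    (hdiff : ∀ y ∈ U, ∀ t ∈ [[a, b]], HasFDerivAt (f · t) (f' y t) y) :
    HasFDerivAt (fun y => ∫ t in a..b, f y t) (∫ t in a..b, f' x t) x := by
  obtain ⟨C, hC⟩ := isCompact_uIcc.exists_eventually_forall_norm_le_of_continuousOn_prod hU hx hf'
  refine intervalIntegral.hasFDerivAt_integral_of_dominated_of_fderiv_le (bound := fun _ => C) hC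
    ?_ (hf x hx).intervalIntegrable ?_ ?_ intervalIntegrable_const ?_
  · filter_upwards [hU.mem_nhds hx] with y hy
    exact ((hf y hy).mono uIoc_subset_uIcc).aestronglyMeasurable measurableSet_uIoc
  · exact ((hf'.comp (Continuous.prodMk_right x).continuousOn fun t ht => ⟨hx, ht⟩).mono
      uIoc_subset_uIcc).aestronglyMeasurable measurableSet_uIoc
  · exact .of_forall fun t ht y hy => hy.2 t (uIoc_subset_uIcc ht)
  · exact .of_forall fun t ht y hy => hdiff y hy.1 t (uIoc_subset_uIcc ht)

section

variable {E : Type*} [NormedAddCommGroup E] [NormedSpace ℝ E] {U : Set E} {u x : E}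

noncomputable def contractingHomotopy (u : E) (ω : E → E →L[ℝ] ℝ) (x : E) : ℝ :=
  ∫ t in (0 : ℝ)..1, ω (u + t • (x - u)) (x - u)

theorem StarConvex.continuousOn_comp_add_smul_sub {Z : Type*} [TopologicalSpace Z] {φ : E → Z}
    (hU : StarConvex ℝ u U) (hφ : ContinuousOn φ U) :
    ContinuousOn (fun p : E × ℝ => φ (u + p.2 • (p.1 - u))) (U ×ˢ Icc 0 1) :=
  hφ.comp (by fun_prop) fun p hp => hU.add_smul_sub_mem hp.1 hp.2.1 hp.2.2

theorem StarConvex.continuousOn_comp_add_smul_sub_of_mem {Z : Type*} [TopologicalSpace Z]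
    {φ : E → Z} (hU : StarConvex ℝ u U) (hφ : ContinuousOn φ U)
    (hx : x ∈ U) : ContinuousOn (fun t : ℝ => φ (u + t • (x - u))) (Icc 0 1) :=
  (hU.continuousOn_comp_add_smul_sub hφ).comp (Continuous.prodMk_right x).continuousOn
    fun _ ht => ⟨hx, ht⟩

variable {ω : E → E →L[ℝ] ℝ}

theorem hasFDerivAt_apply_sub_comp_add_smul_sub (t : ℝ)
    (hω : DifferentiableAt ℝ ω (u + t • (x - u))) :
    HasFDerivAt (fun y => ω (u + t • (y - u)) (y - u))
      (ω (u + t • (x - u)) + t • (fderiv ℝ ω (u + t • (x - u))).flip (x - u)) x := by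
  have hray : HasFDerivAt (fun y : E => u + t • (y - u)) (t • ContinuousLinearMap.id ℝ E) x := by
    simpa using (((hasFDerivAt_id x).sub_const u).const_smul t).const_add u
  refine ((hω.hasFDerivAt.comp x hray).clm_apply ((hasFDerivAt_id x).sub_const u)).congr_fderiv ?_
  ext v
  simp

theorem continuousOn_apply_add_smul_fderiv_flip (hU : IsOpen U) (hstar : StarConvex ℝ u U)
    (hω : ContDiffOn ℝ 1 ω U) :
    ContinuousOn (fun p : E × ℝ => ω (u + p.2 • (p.1 - u))
      + p.2 • (fderiv ℝ ω (u + p.2 • (p.1 - u))).flip (p.1 - u)) (U ×ˢ Icc 0 1) :=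
  (hstar.continuousOn_comp_add_smul_sub hω.continuousOn).add <| continuousOn_snd.smul <|
    ((ContinuousLinearMap.flipₗᵢ ℝ E E ℝ).continuous.comp_continuousOn
      (hstar.continuousOn_comp_add_smul_sub
        (hω.continuousOn_fderiv_of_isOpen hU le_rfl))).clm_apply
      (continuousOn_fst.sub continuousOn_const)

theorem integral_apply_add_mul_fderiv_apply_eq (hU : IsOpen U) (hstar : StarConvex ℝ u U)
    (hω : ContDiffOn ℝ 1 ω U) (hx : x ∈ U) (v : E) :
    ∫ t in (0 : ℝ)..1, (ω (u + t • (x - u)) v + t * fderiv ℝ ω (u + t • (x - u)) (x - u) v)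
      = ω x v := by
  have hωc := hstar.continuousOn_comp_add_smul_sub_of_mem hω.continuousOn hx
  have hDωc := hstar.continuousOn_comp_add_smul_sub_of_mem
    (hω.continuousOn_fderiv_of_isOpen hU le_rfl) hx
  have hderiv : ∀ t ∈ [[(0 : ℝ), 1]], HasDerivAt (fun s => s * ω (u + s • (x - u)) v)
      (ω (u + t • (x - u)) v + t * fderiv ℝ ω (u + t • (x - u)) (x - u) v) t := by
    intro t ht
    rw [uIcc_of_le zero_le_one] at ht
    have hray : HasDerivAt (fun s : ℝ => u + s • (x - u)) (x - u) t := by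
      simpa using ((hasDerivAt_id t).smul_const (x - u)).const_add u
    have hωt := ((hω.differentiableOn one_ne_zero).differentiableAt
      (hU.mem_nhds (hstar.add_smul_sub_mem hx ht.1 ht.2))).hasFDerivAt.comp_hasDerivAt t hray
    simpa [Pi.mul_def] using (hasDerivAt_id t).mul (hωt.clm_apply (hasDerivAt_const t v))
  rw [intervalIntegral.integral_eq_sub_of_hasDerivAt hderiv]
  · simp
  · exact ((hωc.clm_apply continuousOn_const).add (continuousOn_id.mul
      ((hDωc.clm_apply continuousOn_const).clm_apply continuousOn_const))).intervalIntegrable_of_Icc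
      zero_le_one

theorem hasFDerivAt_contractingHomotopy (hU : IsOpen U) (hstar : StarConvex ℝ u U)
    (hω : ContDiffOn ℝ 1 ω U) (hx : x ∈ U) :
    HasFDerivAt (contractingHomotopy u ω)
      (∫ t in (0 : ℝ)..1, ω (u + t • (x - u)) + t • (fderiv ℝ ω (u + t • (x - u))).flip (x - u))
      x := by
  have h01 : [[(0 : ℝ), 1]] = Icc 0 1 := uIcc_of_le zero_le_one
  refine hasFDerivAt_intervalIntegral_of_continuousOn_prod
    (f := fun y t => ω (u + t • (y - u)) (y - u))
    (f' := fun y t => ω (u + t • (y - u)) + t • (fderiv ℝ ω (u + t • (y - u))).flip (y - u))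
    hU hx (fun y hy => ?_) ?_ fun y hy t ht => ?_
  · rw [h01]
    exact (hstar.continuousOn_comp_add_smul_sub_of_mem hω.continuousOn hy).clm_apply
      continuousOn_const
  · rw [h01]
    exact continuousOn_apply_add_smul_fderiv_flip hU hstar hω
  · rw [h01] at ht
    exact hasFDerivAt_apply_sub_comp_add_smul_sub t
      ((hω.differentiableOn one_ne_zero).differentiableAt
        (hU.mem_nhds (hstar.add_smul_sub_mem hy ht.1 ht.2)))

theorem integral_apply_add_smul_fderiv_flip_apply (hU : IsOpen U) (hstar : StarConvex ℝ u U)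
    (hω : ContDiffOn ℝ 1 ω U) (hx : x ∈ U) (v : E) :
    (∫ t in (0 : ℝ)..1, ω (u + t • (x - u)) + t • (fderiv ℝ ω (u + t • (x - u))).flip (x - u)) v
      = ω x v - ∫ t in (0 : ℝ)..1, t * (fderiv ℝ ω (u + t • (x - u)) (x - u) v
          - fderiv ℝ ω (u + t • (x - u)) v (x - u)) := by
  have hωc := hstar.continuousOn_comp_add_smul_sub_of_mem hω.continuousOn hx
  have hDωc := hstar.continuousOn_comp_add_smul_sub_of_mem
    (hω.continuousOn_fderiv_of_isOpen hU le_rfl) hx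
  have hD : ∀ w w' : E, ContinuousOn (fun t : ℝ => fderiv ℝ ω (u + t • (x - u)) w w') (Icc 0 1) :=
    fun w w' => (hDωc.clm_apply continuousOn_const).clm_apply continuousOn_const
  have hF' : IntervalIntegrable (fun t : ℝ => ω (u + t • (x - u))
      + t • (fderiv ℝ ω (u + t • (x - u))).flip (x - u)) volume 0 1 :=
    ((continuousOn_apply_add_smul_fderiv_flip hU hstar hω).comp
      (Continuous.prodMk_right x).continuousOn fun _ ht => ⟨hx, ht⟩).intervalIntegrable_of_Icc
      zero_le_one
  have hFTC : IntervalIntegrable (fun t : ℝ => ω (u + t • (x - u)) v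
      + t * fderiv ℝ ω (u + t • (x - u)) (x - u) v) volume 0 1 :=
    ((hωc.clm_apply continuousOn_const).add
      (continuousOn_id.mul (hD _ _))).intervalIntegrable_of_Icc zero_le_one
  have hrest : IntervalIntegrable (fun t : ℝ => t * (fderiv ℝ ω (u + t • (x - u)) (x - u) v
      - fderiv ℝ ω (u + t • (x - u)) v (x - u))) volume 0 1 :=
    (continuousOn_id.mul ((hD _ _).sub (hD _ _))).intervalIntegrable_of_Icc zero_le_one
  rw [ContinuousLinearMap.intervalIntegral_apply hF',
    ← integral_apply_add_mul_fderiv_apply_eq hU hstar hω hx v,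
    ← intervalIntegral.integral_sub hFTC hrest]
  refine intervalIntegral.integral_congr fun t _ => ?_
  simp only [add_apply, smul_apply, ContinuousLinearMap.flip_apply, smul_eq_mul]
  ring

end

theorem stmt_0_general {d : ℕ} (U : Set (EuclideanSpace ℝ (Fin d)))
    (hU : IsOpen U) (u : EuclideanSpace ℝ (Fin d))
    (hstar : ∀ x ∈ U, ∀ t ∈ Set.Icc (0 : ℝ) 1, u + t • (x - u) ∈ U)
    (ω : EuclideanSpace ℝ (Fin d) → (EuclideanSpace ℝ (Fin d) →L[ℝ] ℝ))
    (hω : ContDiffOn ℝ 1 ω U)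
    (g : EuclideanSpace ℝ (Fin d) → ℝ)
    (hg : ∀ x, g x = ∫ t in (0 : ℝ)..1, ω (u + t • (x - u)) (x - u)) :
    ∀ x ∈ U, ∃ L : EuclideanSpace ℝ (Fin d) →L[ℝ] ℝ,
      HasFDerivAt g L x ∧
      ∀ v, L v = ω x v - ∫ t in (0 : ℝ)..1,
          t * ((fderiv ℝ ω (u + t • (x - u)) (x - u)) v
               - (fderiv ℝ ω (u + t • (x - u)) v) (x - u)) := by
  intro x hx
  have hconv : StarConvex ℝ u U := by
    intro y hy a b _ hb hab
    obtain rfl : a = 1 - b := by linarith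
    convert hstar y hy b ⟨hb, by linarith⟩ using 1
    simp only [sub_smul, one_smul, smul_sub]
    abel
  obtain rfl : g = contractingHomotopy u ω := funext hg
  exact ⟨_, hasFDerivAt_contractingHomotopy hU hconv hω hx,
    integral_apply_add_smul_fderiv_flip_apply hU hconv hω hx⟩

/-- **Contracting-homotopy identity in degree 1** (paper Lemma 3.6).
Let `U ⊆ ℝ^d` be open and star-shaped with center `u`, and let `ω` be a `C¹`
1-form on `U`.  The homotopy `g x = ∫_0^1 ω(u + t(x-u))(x-u) dt` is
differentiable at every `x ∈ U`, with derivative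
`v ↦ ω x v - ∫_0^1 t [(Dω(u+t(x-u))(x-u))(v) - (Dω(u+t(x-u))(v))(x-u)] dt`. -/
theorem stmt_0 {d : ℕ} (hd : 1 ≤ d) (U : Set (EuclideanSpace ℝ (Fin d)))
    (hU : IsOpen U) (u : EuclideanSpace ℝ (Fin d)) (hu : u ∈ U)
    (hstar : ∀ x ∈ U, ∀ t ∈ Set.Icc (0 : ℝ) 1, u + t • (x - u) ∈ U)
    (ω : EuclideanSpace ℝ (Fin d) → (EuclideanSpace ℝ (Fin d) →L[ℝ] ℝ))
    (hω : ContDiffOn ℝ 1 ω U)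
    (g : EuclideanSpace ℝ (Fin d) → ℝ)
    (hg : ∀ x, g x = ∫ t in (0 : ℝ)..1, ω (u + t • (x - u)) (x - u)) :
    ∀ x ∈ U, ∃ L : EuclideanSpace ℝ (Fin d) →L[ℝ] ℝ,
      HasFDerivAt g L x ∧
      ∀ v, L v = ω x v - ∫ t in (0 : ℝ)..1,
          t * ((fderiv ℝ ω (u + t • (x - u)) (x - u)) v
               - (fderiv ℝ ω (u + t • (x - u)) v) (x - u)) :=
  stmt_0_general U hU u hstar ω hω g hg
end

section
/- Let d ≥ 1, let U ⊆ ℝ^d be an open set that is star-shaped with center u ∈ U, and let ω : ℝ^d → (ℝ^d →L[ℝ] ℝ) be continuously differentiable on U and closed on U, i.e. (Dω(x)(v))(w) = (Dω(x)(w))(v) for all x ∈ U and v, w ∈ ℝ^d. Then the function g(x) = ∫_0^1 ω(u + t·(x−u))(x−u) dt satisfies: for every x ∈ U, g is differentiable at x with Fréchet derivative equal to ω(x). In particular, every closed continuously differentiable 1-form on a star-shaped open subset of ℝ^d is exact (Poincaré lemma, the degree-1 case of the paper's Lemma 3.6(1)). -/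
/-!
For `y` near `x`, the `y`-derivative of the integrand `ω (u + t • (y - u)) (y - u)` is
`v ↦ ω(γ t) v + t • Dω(γ t) v (y - u)` with `γ t = u + t • (y - u)`. Closedness swaps the two
arguments of `Dω`, and at `y = x` the result is exactly `d/dt (t • ω (γ t))`, whose integral over
`[0, 1]` is `ω x`. Differentiating under the integral sign is legitimate because this derivative is
jointly continuous on a neighbourhood of the compact set `{x} × [0, 1]`.
-/

open Set Filter Topology MeasureTheory Function
open scoped Interval

section ParametricIntegral

variable {H E : Type*} [NormedAddCommGroup H] [NormedSpace ℝ H]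
  [NormedAddCommGroup E] [NormedSpace ℝ E]

theorem hasFDerivAt_intervalIntegral_of_continuousOn {F : H → ℝ → E} {F' : H → ℝ → H →L[ℝ] E}
    {W : Set (H × ℝ)} {x : H} {a b : ℝ} (hW : IsOpen W) (hxW : ∀ t ∈ [[a, b]], (x, t) ∈ W)
    (hF : ContinuousOn (uncurry F) W) (hF' : ContinuousOn (uncurry F') W)
    (hderiv : ∀ p ∈ W, HasFDerivAt (F · p.2) (F' p.1 p.2) p.1) :
    HasFDerivAt (fun y => ∫ t in a..b, F y t) (∫ t in a..b, F' x t) x := by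
  have tube : ∀ᶠ y in 𝓝 x, ∀ t ∈ [[a, b]], (y, t) ∈ W ∧ ‖F' y t - F' x t‖ < 1 := by
    refine isCompact_uIcc.eventually_forall_of_forall_eventually fun t ht => ?_
    have hF'xt := hF'.continuousAt (hW.mem_nhds (hxW t ht))
    have hdiff : ContinuousAt (fun z : H × ℝ => F' z.1 z.2 - F' x z.2) (x, t) :=
      hF'xt.sub (hF'xt.comp_of_eq (f := fun z : H × ℝ => (x, z.2)) (by fun_prop) rfl)
    filter_upwards [hW.mem_nhds (hxW t ht), hdiff.eventually (Metric.ball_mem_nhds _ one_pos)]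
      with z hzW hz
    simpa [hzW] using hz
  have hIoc : Ι a b ⊆ [[a, b]] := uIoc_subset_uIcc
  have hF'x : ContinuousOn (F' x) [[a, b]] := hF'.comp (by fun_prop) hxW
  refine intervalIntegral.hasFDerivAt_integral_of_dominated_of_fderiv_le
    (bound := fun t => ‖F' x t‖ + 1) tube ?_ ((hF.comp (by fun_prop) hxW).intervalIntegrable)
    ((hF'x.mono hIoc).aestronglyMeasurable measurableSet_uIoc) ?_
    ((hF'x.norm.add continuousOn_const).intervalIntegrable) ?_
  · filter_upwards [tube] with y hy
    exact ((hF.comp (by fun_prop) fun t ht => (hy t ht).1).mono hIoc).aestronglyMeasurable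
      measurableSet_uIoc
  · refine ae_of_all _ fun t ht y hy => ?_
    have hclose := (hy t (hIoc ht)).2
    calc ‖F' y t‖ ≤ ‖F' x t‖ + ‖F' y t - F' x t‖ := norm_le_insert' _ _
      _ ≤ ‖F' x t‖ + 1 := by linarith
  · exact ae_of_all _ fun t ht y hy => hderiv (y, t) (hy t (hIoc ht)).1

end ParametricIntegral

section RadialPrimitive

variable {E F : Type*} [NormedAddCommGroup E] [NormedSpace ℝ E]
  [NormedAddCommGroup F] [NormedSpace ℝ F]

/-- The contracting homotopy `h₀^{U,u}` of the paper, on `1`-forms. -/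
noncomputable def radialPrimitive (ω : E → E →L[ℝ] F) (u x : E) : F :=
  ∫ t in (0 : ℝ)..1, ω (u + t • (x - u)) (x - u)

theorem hasFDerivAt_apply_radial {ω : E → E →L[ℝ] F} {u y : E} {t : ℝ}
    (hω : DifferentiableAt ℝ ω (u + t • (y - u)))
    (hsymm : ∀ v w, fderiv ℝ ω (u + t • (y - u)) v w = fderiv ℝ ω (u + t • (y - u)) w v) :
    HasFDerivAt (fun z => ω (u + t • (z - u)) (z - u))
      (ω (u + t • (y - u)) + t • fderiv ℝ ω (u + t • (y - u)) (y - u)) y := by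
  have hpath : HasFDerivAt (fun z : E => u + t • (z - u)) (t • ContinuousLinearMap.id ℝ E) y :=
    (((hasFDerivAt_id y).sub_const u).const_smul t).const_add u
  refine ((hω.hasFDerivAt.comp y hpath).clm_apply ((hasFDerivAt_id y).sub_const u)).congr_fderiv
    ?_
  ext v
  simp [hsymm v]

theorem integral_add_smul_fderiv_comp_segment [CompleteSpace F] {ω : E → E →L[ℝ] F} {u x : E}
    (hω : ∀ t ∈ Icc (0 : ℝ) 1, DifferentiableAt ℝ ω (u + t • (x - u)))
    (hint : IntervalIntegrable
      (fun t : ℝ => ω (u + t • (x - u)) + t • fderiv ℝ ω (u + t • (x - u)) (x - u)) volume 0 1) :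
    ∫ t in (0 : ℝ)..1, (ω (u + t • (x - u)) + t • fderiv ℝ ω (u + t • (x - u)) (x - u)) = ω x := by
  have hderiv : ∀ t ∈ [[(0 : ℝ), 1]], HasDerivAt (fun s : ℝ => s • ω (u + s • (x - u)))
      (ω (u + t • (x - u)) + t • fderiv ℝ ω (u + t • (x - u)) (x - u)) t := by
    intro t ht
    rw [uIcc_of_le zero_le_one] at ht
    have hpath : HasDerivAt (fun s : ℝ => u + s • (x - u)) (x - u) t := by
      simpa using ((hasDerivAt_id t).smul_const (x - u)).const_add u
    refine ((hasDerivAt_id t).smul ((hω t ht).hasFDerivAt.comp_hasDerivAt t hpath)).congr_deriv ?_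
    simp [add_comm]
  rw [intervalIntegral.integral_eq_sub_of_hasDerivAt hderiv hint]
  simp

theorem hasFDerivAt_radialPrimitive [CompleteSpace F] {ω : E → E →L[ℝ] F} {U : Set E} {u x : E}
    (hU : IsOpen U) (hstar : StarConvex ℝ u U) (hω : ContDiffOn ℝ 1 ω U)
    (hclosed : ∀ y ∈ U, ∀ v w, fderiv ℝ ω y v w = fderiv ℝ ω y w v) (hx : x ∈ U) :
    HasFDerivAt (radialPrimitive ω u) (ω x) x := by
  set W : Set (E × ℝ) := {p | u + p.2 • (p.1 - u) ∈ U}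
  have hW : IsOpen W := hU.preimage (by fun_prop)
  have hxW : ∀ t ∈ [[(0 : ℝ), 1]], (x, t) ∈ W := by
    intro t ht
    rw [uIcc_of_le zero_le_one] at ht
    exact hstar.add_smul_sub_mem hx ht.1 ht.2
  have hγ : ContinuousOn (fun p : E × ℝ => u + p.2 • (p.1 - u)) W := by fun_prop
  have hF : ContinuousOn (uncurry fun y t => ω (u + t • (y - u)) (y - u)) W :=
    (hω.continuousOn.comp hγ fun _ hp => hp).clm_apply (by fun_prop)
  have hF' : ContinuousOn (uncurry fun y t =>
      ω (u + t • (y - u)) + t • fderiv ℝ ω (u + t • (y - u)) (y - u)) W :=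
    (hω.continuousOn.comp hγ fun _ hp => hp).add <| continuousOn_snd.smul <|
      ((hω.continuousOn_fderiv_of_isOpen hU le_rfl).comp hγ fun _ hp => hp).clm_apply (by fun_prop)
  have hdiff : ∀ y ∈ U, DifferentiableAt ℝ ω y := fun y hy =>
    (hω.differentiableOn one_ne_zero).differentiableAt (hU.mem_nhds hy)
  have key := hasFDerivAt_intervalIntegral_of_continuousOn hW hxW hF hF'
    fun p hp => hasFDerivAt_apply_radial (hdiff _ hp) (hclosed _ hp)
  rwa [integral_add_smul_fderiv_comp_segment
    (fun t ht => hdiff _ (hstar.add_smul_sub_mem hx ht.1 ht.2))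
    ((hF'.comp (by fun_prop) hxW).intervalIntegrable)] at key

end RadialPrimitive

theorem stmt_1_general {d : ℕ} (U : Set (EuclideanSpace ℝ (Fin d)))
    (hU : IsOpen U) (u : EuclideanSpace ℝ (Fin d))
    (hstar : ∀ x ∈ U, ∀ t ∈ Set.Icc (0 : ℝ) 1, u + t • (x - u) ∈ U)
    (ω : EuclideanSpace ℝ (Fin d) → (EuclideanSpace ℝ (Fin d) →L[ℝ] ℝ))
    (hω : ContDiffOn ℝ 1 ω U)
    (hclosed : ∀ x ∈ U, ∀ v w : EuclideanSpace ℝ (Fin d),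
        (fderiv ℝ ω x v) w = (fderiv ℝ ω x w) v)
    (g : EuclideanSpace ℝ (Fin d) → ℝ)
    (hg : ∀ x, g x = ∫ t in (0 : ℝ)..1, ω (u + t • (x - u)) (x - u)) :
    ∀ x ∈ U, HasFDerivAt g (ω x) x := by
  have hU_star : StarConvex ℝ u U := starConvex_iff_segment_subset.2 fun x hx => by
    rw [segment_eq_image']
    exact image_subset_iff.2 (hstar x hx)
  obtain rfl : g = radialPrimitive ω u := funext hg
  exact fun x hx => hasFDerivAt_radialPrimitive hU hU_star hω hclosed hx

/-- **Poincaré lemma in degree 1 on a star-shaped open set** (paper Lemma 3.6(1)).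
If `U ⊆ ℝ^d` is open and star-shaped with center `u`, and `ω` is a `C¹` 1-form
on `U` which is closed on `U` (its derivative is symmetric), then
`g x = ∫_0^1 ω(u + t(x-u))(x-u) dt` is a primitive of `ω` on `U`:
at every `x ∈ U`, `g` is differentiable with Fréchet derivative `ω x`.
In particular every closed `C¹` 1-form on a star-shaped open set is exact. -/
theorem stmt_1 {d : ℕ} (hd : 1 ≤ d) (U : Set (EuclideanSpace ℝ (Fin d)))
    (hU : IsOpen U) (u : EuclideanSpace ℝ (Fin d)) (hu : u ∈ U)
    (hstar : ∀ x ∈ U, ∀ t ∈ Set.Icc (0 : ℝ) 1, u + t • (x - u) ∈ U)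
    (ω : EuclideanSpace ℝ (Fin d) → (EuclideanSpace ℝ (Fin d) →L[ℝ] ℝ))
    (hω : ContDiffOn ℝ 1 ω U)
    (hclosed : ∀ x ∈ U, ∀ v w : EuclideanSpace ℝ (Fin d),
        (fderiv ℝ ω x v) w = (fderiv ℝ ω x w) v)
    (g : EuclideanSpace ℝ (Fin d) → ℝ)
    (hg : ∀ x, g x = ∫ t in (0 : ℝ)..1, ω (u + t • (x - u)) (x - u)) :
    ∀ x ∈ U, HasFDerivAt g (ω x) x :=
  stmt_1_general U hU u hstar ω hω hclosed g hg
end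

section
/- Let d ≥ 1, u ∈ ℝ^d, k ≥ 1 and m ≥ 0 integers, and let f : ℝ^d → ℝ be of class C^m such that for every j ≤ m the j-th iterated Fréchet derivative of f is bounded on ℝ^d. Define I(f)(x) = ∫_0^1 t^{k−1} f(t·x + (1−t)·u) dt. Then I(f) is of class C^m and for every j ≤ m and every x ∈ ℝ^d, ‖iteratedFDeriv^j (I(f))(x)‖ ≤ sup_{y ∈ ℝ^d} ‖iteratedFDeriv^j f(y)‖. (This is the paper's estimate ‖D^κ I^u_{k−1}(f)‖_∞ ≤ ‖D^κ f‖_∞ in Lemma 3.6(3), showing the operator I^u_{k−1} is continuous in the Fréchet topology given by the seminorms s_m(f) = sup_{|κ| ≤ m} ‖D^κ f‖_∞.) -/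
/-!
Substituting `y = t • x + (1 - t) • u` scales every direction by `t`, so differentiating
under the integral sign gives `D (I_c g) = I_{c+1} (D g)`, and inductively
`Dⁿ (I_c g) = I_{c+n} (Dⁿ g)`. Since `0 ≤ t ^ (c + n) ≤ 1` on an interval of length one,
each derivative of `I_c g` is bounded by the supremum of the corresponding derivative of `g`.
-/

open Set Function

variable {E F G : Type*} [NormedAddCommGroup E] [NormedSpace ℝ E]
  [NormedAddCommGroup F] [NormedSpace ℝ F] [NormedAddCommGroup G] [NormedSpace ℝ G]

/-- The paper's `I^u_{k-1}` is the case `c = k - 1`. -/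
noncomputable def radialIntegral (u : E) (c : ℕ) (g : E → F) (x : E) : F :=
  ∫ t in (0 : ℝ)..1, t ^ c • g (t • x + (1 - t) • u)

namespace radialIntegral

variable {u : E} {c : ℕ} {g : E → F}

lemma norm_pow_smul_le {t : ℝ} (ht : t ∈ Ioc 0 1) (v : F) : ‖t ^ c • v‖ ≤ ‖v‖ := by
  rw [norm_smul, norm_pow, Real.norm_of_nonneg ht.1.le]
  exact mul_le_of_le_one_left (norm_nonneg v) (pow_le_one₀ ht.1.le ht.2)

lemma norm_le {C : ℝ} (hC : ∀ y, ‖g y‖ ≤ C) (x : E) : ‖radialIntegral u c g x‖ ≤ C := by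
  simpa [radialIntegral] using
    intervalIntegral.norm_integral_le_of_norm_le_const (a := 0) (b := 1) fun t ht =>
      (norm_pow_smul_le (c := c) (by simpa using ht) _).trans (hC _)

lemma continuous (hg : Continuous g) : Continuous (radialIntegral u c g) :=
  intervalIntegral.continuous_parametric_intervalIntegral_of_continuous' (by fun_prop) 0 1

lemma _root_.LinearIsometryEquiv.map_radialIntegral [CompleteSpace F] [CompleteSpace G]
    (L : F ≃ₗᵢ[ℝ] G) (x : E) :
    L (radialIntegral u c g x) = radialIntegral u c (L ∘ g) x := by
  simpa [radialIntegral] using (L.toLinearIsometry.intervalIntegral_comp_comm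
    (a := 0) (b := 1) (μ := MeasureTheory.volume) fun t => t ^ c • g (t • x + (1 - t) • u)).symm

lemma hasFDerivAt [CompleteSpace F] (hg : ContDiff ℝ 1 g) {C : ℝ}
    (hC : ∀ y, ‖fderiv ℝ g y‖ ≤ C) (x₀ : E) :
    HasFDerivAt (radialIntegral u c g) (radialIntegral u (c + 1) (fderiv ℝ g) x₀) x₀ := by
  have hg' : Continuous (fderiv ℝ g) := hg.continuous_fderiv one_ne_zero
  refine intervalIntegral.hasFDerivAt_integral_of_dominated_of_fderiv_le
    (μ := MeasureTheory.volume)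
    (F := fun x t => t ^ c • g (t • x + (1 - t) • u))
    (F' := fun x t => t ^ (c + 1) • fderiv ℝ g (t • x + (1 - t) • u)) (bound := fun _ => C)
    Filter.univ_mem (.of_forall fun x => ?_) ?_ ?_ (.of_forall fun t ht x _ => ?_)
    intervalIntegrable_const (.of_forall fun t _ x _ => ?_)
  · exact (show Continuous fun t : ℝ => t ^ c • g (t • x + (1 - t) • u) by
      have := hg.continuous; fun_prop).aestronglyMeasurable
  · exact (show Continuous fun t : ℝ => t ^ c • g (t • x₀ + (1 - t) • u) by
      have := hg.continuous; fun_prop).intervalIntegrable _ _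
  · exact (show Continuous fun t : ℝ => t ^ (c + 1) • fderiv ℝ g (t • x₀ + (1 - t) • u) by
      fun_prop).aestronglyMeasurable
  · exact (norm_pow_smul_le (by simpa using ht) _).trans (hC _)
  · have hinner : HasFDerivAt (fun x : E => t • x + (1 - t) • u)
        (t • ContinuousLinearMap.id ℝ E) x :=
      ((hasFDerivAt_id x).const_smul t).add_const _
    refine (((hg.differentiable one_ne_zero _).hasFDerivAt.comp x hinner).const_smul
      (t ^ c)).congr_fderiv ?_
    ext v
    simp [pow_succ, mul_smul]

section iterated

variable [CompleteSpace F] {m : ℕ}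

lemma hasFDerivAt_iteratedFDeriv (hg : ContDiff ℝ m g)
    (hbd : ∀ j < m, ∃ C, ∀ y, ‖iteratedFDeriv ℝ (j + 1) g y‖ ≤ C) {n : ℕ} (hn : n < m) (x : E) :
    HasFDerivAt (radialIntegral u c (iteratedFDeriv ℝ n g))
      (radialIntegral u (c + 1) (fderiv ℝ (iteratedFDeriv ℝ n g)) x) x := by
  obtain ⟨C, hC⟩ := hbd n hn
  exact hasFDerivAt (hg.iteratedFDeriv_right (by exact_mod_cast (by omega : 1 + n ≤ m)))
    (fun y => norm_fderiv_iteratedFDeriv.trans_le (hC y)) x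

lemma iteratedFDeriv_eq (hg : ContDiff ℝ m g)
    (hbd : ∀ j < m, ∃ C, ∀ y, ‖iteratedFDeriv ℝ (j + 1) g y‖ ≤ C) : ∀ n ≤ m,
    iteratedFDeriv ℝ n (radialIntegral u c g) = radialIntegral u (c + n) (iteratedFDeriv ℝ n g)
  | 0, _ => by
    ext1 x
    rw [iteratedFDeriv_zero_eq_comp, comp_apply, LinearIsometryEquiv.map_radialIntegral]
    rfl
  | n + 1, hn => by
    ext1 x
    rw [iteratedFDeriv_succ_eq_comp_left, comp_apply,
      iteratedFDeriv_eq hg hbd n (Nat.le_of_succ_le hn),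
      (hasFDerivAt_iteratedFDeriv hg hbd hn x).fderiv, ← add_assoc]
    -- explicit types: unification fails across the seminormed-group instance paths otherwise
    exact LinearIsometryEquiv.map_radialIntegral (F := E →L[ℝ] E [×n]→L[ℝ] F)
      (G := E [×n + 1]→L[ℝ] F) _ x

lemma contDiff (hg : ContDiff ℝ m g)
    (hbd : ∀ j < m, ∃ C, ∀ y, ‖iteratedFDeriv ℝ (j + 1) g y‖ ≤ C) :
    ContDiff ℝ m (radialIntegral u c g) := by
  refine contDiff_nat_iff_continuous_differentiable.2 ⟨fun n hn => ?_, fun n hn => ?_⟩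
  · rw [iteratedFDeriv_eq hg hbd n hn]
    exact continuous (hg.continuous_iteratedFDeriv (by exact_mod_cast hn))
  · rw [iteratedFDeriv_eq hg hbd n hn.le]
    exact fun x => (hasFDerivAt_iteratedFDeriv hg hbd hn x).differentiableAt

end iterated

end radialIntegral

theorem stmt_6_general {d : ℕ} (u : EuclideanSpace ℝ (Fin d))
    (k : ℕ) (m : ℕ)
    (f : EuclideanSpace ℝ (Fin d) → ℝ) (hf : ContDiff ℝ m f)
    (hbd : ∀ j ≤ m, ∃ C, ∀ y, ‖iteratedFDeriv ℝ j f y‖ ≤ C)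
    (If : EuclideanSpace ℝ (Fin d) → ℝ)
    (hIf : ∀ x, If x = ∫ t in (0 : ℝ)..1, t ^ (k - 1) * f (t • x + (1 - t) • u)) :
    ContDiff ℝ m If ∧
    ∀ j ≤ m, ∀ x, ‖iteratedFDeriv ℝ j If x‖ ≤ ⨆ y, ‖iteratedFDeriv ℝ j f y‖ := by
  obtain rfl : If = radialIntegral u (k - 1) f := funext hIf
  have hbd' : ∀ j < m, ∃ C, ∀ y, ‖iteratedFDeriv ℝ (j + 1) f y‖ ≤ C := fun j hj => hbd (j + 1) hj
  refine ⟨radialIntegral.contDiff hf hbd', fun j hj x => ?_⟩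
  obtain ⟨C, hC⟩ := hbd j hj
  have hbdd : BddAbove (range fun y => ‖iteratedFDeriv ℝ j f y‖) := ⟨C, forall_mem_range.2 hC⟩
  rw [radialIntegral.iteratedFDeriv_eq hf hbd' j hj]
  exact radialIntegral.norm_le (le_ciSup hbdd) x

/-- **Continuity of `I^u_{k-1}` in the Fréchet topology** (paper Lemma 3.6(3)):
`‖D^κ I^u_{k-1}(f)‖_∞ ≤ ‖D^κ f‖_∞`.  If `f : ℝ^d → ℝ` is `C^m` with all
iterated derivatives of order `≤ m` bounded, then
`I(f)(x) = ∫_0^1 t^{k-1} f(tx + (1-t)u) dt` is `C^m` and for every `j ≤ m`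
and every `x`, `‖D^j(I(f))(x)‖ ≤ sup_y ‖D^j f(y)‖`. -/
theorem stmt_6 {d : ℕ} (hd : 1 ≤ d) (u : EuclideanSpace ℝ (Fin d))
    (k : ℕ) (hk : 1 ≤ k) (m : ℕ)
    (f : EuclideanSpace ℝ (Fin d) → ℝ) (hf : ContDiff ℝ m f)
    (hbd : ∀ j ≤ m, ∃ C, ∀ y, ‖iteratedFDeriv ℝ j f y‖ ≤ C)
    (If : EuclideanSpace ℝ (Fin d) → ℝ)
    (hIf : ∀ x, If x = ∫ t in (0 : ℝ)..1, t ^ (k - 1) * f (t • x + (1 - t) • u)) :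
    ContDiff ℝ m If ∧
    ∀ j ≤ m, ∀ x, ‖iteratedFDeriv ℝ j If x‖ ≤ ⨆ y, ‖iteratedFDeriv ℝ j f y‖ :=
  stmt_6_general u k m f hf hbd If hIf
end
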